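/- arXiv:1610.07726 — 3 statements merged into one kernel-verified Lean document; each statement's English description precedes it below -/
import Mathlib

section
/- With the value-based optimal dual penalty M*(α,z) = Σ_{n=0}^{N-1} (V_{n+1}(x_{n+1}) − E[V_{n+1}(x_{n+1})|x_n, a_n]), the pathwise inner optimization recovers the optimal value almost surely: sup over all action sequences of {Σ_{n=0}^{N-1} r_n(x_n, a_n) + r_N(x_N) − M*(a, z)} = V₀(x₀) almost surely (strong duality holds pathwise, not just in expectation). -/
/-!
Along every noise path the value-based penalty telescopes: the penalized reward of an action
sequence equals `V₀(x₀)` plus the Bellman gaps `Q_n(x_n, a_n) - V_n(x_n)` of the actions taken.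
These gaps are nonpositive by the Bellman inequality and vanish along the greedy policy, so the
supremum over action sequences is attained and equals `V₀(x₀)` for every path, not merely almost
surely.
-/

open MeasureTheory

/-- State trajectory under an action sequence `a` and noise realization `z`:
`x_0 = x0`, `x_{n+1} = f x_n a_n z_{n+1}`. -/
noncomputable def traj {X A Ξ : Type*} {N : ℕ} (f : X → A → Ξ → X) (x0 : X)
    (a : Fin N → A) (z : Fin N → Ξ) : ℕ → X :=
  fun n => Nat.rec x0 (fun k xk => if h : k < N then f xk (a ⟨k, h⟩) (z ⟨k, h⟩) else xk) n

/-- State trajectory under a non-anticipative (Markov) policy `α`. -/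
noncomputable def ptraj {X A Ξ : Type*} {N : ℕ} (f : X → A → Ξ → X) (x0 : X)
    (α : ℕ → X → A) (z : Fin N → Ξ) : ℕ → X :=
  fun n => Nat.rec x0 (fun k xk => if h : k < N then f xk (α k xk) (z ⟨k, h⟩) else xk) n

/-- Action sequence induced by a non-anticipative policy along its own trajectory. -/
noncomputable def pact {X A Ξ : Type*} {N : ℕ} (f : X → A → Ξ → X) (x0 : X)
    (α : ℕ → X → A) (z : Fin N → Ξ) : Fin N → A :=
  fun n => α n (ptraj f x0 α z n)

/-- Total reward of an action sequence along the noise path `z`. -/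
noncomputable def totalReward {X A Ξ : Type*} {N : ℕ} (f : X → A → Ξ → X) (x0 : X)
    (r : ℕ → X → A → ℝ) (rN : X → ℝ) (a : Fin N → A) (z : Fin N → Ξ) : ℝ :=
  (∑ n : Fin N, r n (traj f x0 a z n) (a n)) + rN (traj f x0 a z N)

theorem traj_pact {X A Ξ : Type*} {N : ℕ} (f : X → A → Ξ → X) (x0 : X) (α : ℕ → X → A)
    (z : Fin N → Ξ) (n : ℕ) :
    traj f x0 (pact f x0 α z) z n = ptraj f x0 α z n := by
  induction n with
  | zero => rfl
  | succ k ih =>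
    change (if h : k < N then f (traj f x0 _ z k) _ (z ⟨k, h⟩) else traj f x0 _ z k) =
      (if h : k < N then f (ptraj f x0 α z k) _ (z ⟨k, h⟩) else ptraj f x0 α z k)
    rw [ih]
    rfl

section Duality

variable {X A Ξ : Type*} [MeasurableSpace Ξ] {N : ℕ} (f : X → A → Ξ → X) (x0 : X)
  (r : ℕ → X → A → ℝ) (rN : X → ℝ) (ρ : Measure Ξ) (V : ℕ → X → ℝ)

noncomputable def qValue (n : ℕ) (x : X) (a : A) : ℝ :=
  r n x a + ∫ ζ, V (n + 1) (f x a ζ) ∂ρ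

noncomputable def penalizedReward (a : Fin N → A) (z : Fin N → Ξ) : ℝ :=
  totalReward f x0 r rN a z -
    ∑ n : Fin N,
      (V (n + 1) (traj f x0 a z (n + 1)) - ∫ ζ, V (n + 1) (f (traj f x0 a z n) (a n) ζ) ∂ρ)

theorem Fin.sum_sub_succ {M : Type*} [AddCommGroup M] (u : ℕ → M) (N : ℕ) :
    ∑ n : Fin N, (u n - u (n + 1)) = u 0 - u N := by
  rw [Fin.sum_univ_eq_sum_range (fun n => u n - u (n + 1)), Finset.sum_range_sub']

theorem penalizedReward_eq (hVN : ∀ x, V N x = rN x) (a : Fin N → A) (z : Fin N → Ξ) :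
    penalizedReward f x0 r rN ρ V a z =
      V 0 x0 + ∑ n : Fin N,
        (qValue f r ρ V n (traj f x0 a z n) (a n) - V n (traj f x0 a z n)) := by
  have htel := Fin.sum_sub_succ (fun n => V n (traj f x0 a z n)) N
  simp only [penalizedReward, totalReward, qValue, ← hVN] at htel ⊢
  rw [show traj f x0 a z 0 = x0 from rfl] at htel
  simp only [Finset.sum_sub_distrib, Finset.sum_add_distrib] at htel ⊢
  linarith

variable {f x0 r rN ρ V}

theorem penalizedReward_le (hVN : ∀ x, V N x = rN x)
    (hBellmanLE : ∀ n < N, ∀ x a, qValue f r ρ V n x a ≤ V n x)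
    (a : Fin N → A) (z : Fin N → Ξ) :
    penalizedReward f x0 r rN ρ V a z ≤ V 0 x0 := by
  rw [penalizedReward_eq f x0 r rN ρ V hVN]
  have hgaps : ∑ n : Fin N,
      (qValue f r ρ V n (traj f x0 a z n) (a n) - V n (traj f x0 a z n)) ≤ 0 :=
    Finset.sum_nonpos fun n _ => sub_nonpos.mpr (hBellmanLE n n.isLt _ _)
  linarith

theorem penalizedReward_pact (hVN : ∀ x, V N x = rN x) {α : ℕ → X → A}
    (hα : ∀ n < N, ∀ x, V n x = qValue f r ρ V n x (α n x)) (z : Fin N → Ξ) :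
    penalizedReward f x0 r rN ρ V (pact f x0 α z) z = V 0 x0 := by
  rw [penalizedReward_eq f x0 r rN ρ V hVN, add_eq_left]
  refine Finset.sum_eq_zero fun n _ => ?_
  rw [traj_pact, pact, hα n n.isLt, sub_self]

theorem iSup_penalizedReward (hVN : ∀ x, V N x = rN x)
    (hBellmanLE : ∀ n < N, ∀ x a, qValue f r ρ V n x a ≤ V n x)
    {α : ℕ → X → A} (hα : ∀ n < N, ∀ x, V n x = qValue f r ρ V n x (α n x))
    (z : Fin N → Ξ) :
    ⨆ a, penalizedReward f x0 r rN ρ V a z = V 0 x0 :=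
  IsGreatest.csSup_eq ⟨⟨pact f x0 α z, penalizedReward_pact hVN hα z⟩,
    Set.forall_mem_range.mpr fun a => penalizedReward_le hVN hBellmanLE a z⟩

end Duality

theorem pathwise_strong_duality_general {X A Ξ : Type*} [MeasurableSpace Ξ] [Nonempty A] {N : ℕ}
    (f : X → A → Ξ → X) (x0 : X) (r : ℕ → X → A → ℝ) (rN : X → ℝ)
    (ρ : Measure Ξ)
    (P : Measure (Fin N → Ξ))
    (V : ℕ → X → ℝ)
    -- Bellman recursion with attained suprema
    (hVN : ∀ x, V N x = rN x)
    (hBellmanLE : ∀ n < N, ∀ (x : X) (a : A),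
      r n x a + ∫ ζ, V (n + 1) (f x a ζ) ∂ρ ≤ V n x)
    (hBellmanAtt : ∀ n < N, ∀ x : X, ∃ a : A,
      V n x = r n x a + ∫ ζ, V (n + 1) (f x a ζ) ∂ρ) :
    ∀ᵐ z ∂P,
      (⨆ a : Fin N → A,
        (totalReward f x0 r rN a z -
          ∑ n : Fin N,
            (V (n + 1) (traj f x0 a z (n + 1)) -
              ∫ ζ, V (n + 1) (f (traj f x0 a z n) (a n) ζ) ∂ρ)))
        = V 0 x0 := by
  choose act hact using hBellmanAtt
  let α : ℕ → X → A := fun n x => if h : n < N then act n h x else Classical.arbitrary A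
  have hα : ∀ n < N, ∀ x, V n x = qValue f r ρ V n x (α n x) := fun n hn x => by
    simp only [α, dif_pos hn]
    exact hact n hn x
  exact Filter.Eventually.of_forall (iSup_penalizedReward hVN hBellmanLE hα)

/-- **Pathwise strong duality.** With the value-based optimal dual penalty
`M*(a,z) = Σₙ (V_{n+1}(x_{n+1}) − E[V_{n+1}(x_{n+1})|xₙ,aₙ])`, the pathwise inner
optimization recovers the optimal value almost surely:
`sup_a {total reward − M*(a,z)} = V₀(x₀)` a.s. -/
theorem pathwise_strong_duality {X A Ξ : Type*} [MeasurableSpace Ξ] [Nonempty A] {N : ℕ}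
    (f : X → A → Ξ → X) (x0 : X) (r : ℕ → X → A → ℝ) (rN : X → ℝ)
    (ρ : Measure Ξ) [IsProbabilityMeasure ρ]
    (P : Measure (Fin N → Ξ)) (hP : P = Measure.pi fun _ => ρ)
    (V : ℕ → X → ℝ)
    -- Bellman recursion with attained suprema
    (hVN : ∀ x, V N x = rN x)
    (hBellmanLE : ∀ n < N, ∀ (x : X) (a : A),
      r n x a + ∫ ζ, V (n + 1) (f x a ζ) ∂ρ ≤ V n x)
    (hBellmanAtt : ∀ n < N, ∀ x : X, ∃ a : A,
      V n x = r n x a + ∫ ζ, V (n + 1) (f x a ζ) ∂ρ)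
    (hVint : ∀ n < N, ∀ (x : X) (a : A), Integrable (fun ζ => V (n + 1) (f x a ζ)) ρ) :
    ∀ᵐ z ∂P,
      (⨆ a : Fin N → A,
        (totalReward f x0 r rN a z -
          ∑ n : Fin N,
            (V (n + 1) (traj f x0 a z (n + 1)) -
              ∫ ζ, V (n + 1) (f (traj f x0 a z n) (a n) ζ) ∂ρ)))
        = V 0 x0 :=
  pathwise_strong_duality_general f x0 r rN ρ P V hVN hBellmanLE hBellmanAtt
end

section
/- For the linear-quadratic control problem with state dynamics x_{n+1} = A_n x_n + B_n a_n + z_{n+1} and quadratic costs, the optimal value function is V_n(x_n) = x_nᵀ K_n x_n + Σ_{i=n}^{N−1} E[z_{i+1}ᵀ K_{i+1} z_{i+1}], where the matrices K_n are given by the Riccati recursion K_N = Q_N and K_n = A_nᵀ(K_{n+1} − K_{n+1}B_n(B_nᵀK_{n+1}B_n + R_n)^{−1}B_nᵀK_{n+1})A_n + Q_n, and the optimal policy is α*_n(x_n) = L_n x_n with L_n = −(B_nᵀK_{n+1}B_n + R_n)^{−1}B_nᵀK_{n+1}A_n. -/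
/-!
Backward induction on `n`. If `V_{n+1}(x) = xᵀ K_{n+1} x + c_{n+1}` with `K_{n+1} ⪰ 0`, the
zero-mean noise only adds the constant `E[zᵀ K_{n+1} z]` to the expected cost-to-go, and
completing the square in the action turns the Bellman integrand into
`(a - Lₙ x)ᵀ Sₙ (a - Lₙ x) + xᵀ Kₙ x + cₙ` with `Sₙ = BₙᵀK_{n+1}Bₙ + Rₙ ≻ 0`, so the infimum is
attained at `a = Lₙ x`. The cross term vanishes by the normal equation
`Sₙ Lₙ = -BₙᵀK_{n+1}Aₙ`, which also gives the closed-loop form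
`Kₙ = (Aₙ + BₙLₙ)ᵀ K_{n+1} (Aₙ + BₙLₙ) + LₙᵀRₙLₙ + Qₙ`; hence `Kₙ ⪰ 0` and the induction goes on.
-/

open MeasureTheory Matrix

namespace Matrix

variable {l m n o : Type*} [Fintype m] [Fintype n] [Fintype o]

lemma add_dotProduct_mulVec_add (M : Matrix n n ℝ) (u v : n → ℝ) :
    (u + v) ⬝ᵥ (M *ᵥ (u + v)) =
      u ⬝ᵥ (M *ᵥ u) + (u ⬝ᵥ (M *ᵥ v) + v ⬝ᵥ (M *ᵥ u)) + v ⬝ᵥ (M *ᵥ v) := by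
  simp only [mulVec_add, dotProduct_add, add_dotProduct]
  ring

lemma IsSymm.dotProduct_mulVec_comm {M : Matrix n n ℝ} (hM : M.IsSymm) (u v : n → ℝ) :
    u ⬝ᵥ (M *ᵥ v) = v ⬝ᵥ (M *ᵥ u) := by
  rw [dotProduct_mulVec, ← mulVec_transpose, hM.eq, dotProduct_comm]

lemma dotProduct_transpose_mul_mul_mulVec [Fintype l] (P : Matrix m l ℝ) (M : Matrix m n ℝ)
    (N : Matrix n o ℝ) (u : l → ℝ) (v : o → ℝ) :
    u ⬝ᵥ ((Pᵀ * M * N) *ᵥ v) = (P *ᵥ u) ⬝ᵥ (M *ᵥ (N *ᵥ v)) := by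
  rw [← mulVec_mulVec, ← mulVec_mulVec, dotProduct_mulVec, ← mulVec_transpose, transpose_transpose]

lemma PosSemidef.ciInf_eq_of_eq_dotProduct_mulVec_sub_add {S : Matrix n n ℝ} (hS : S.PosSemidef)
    {f : (n → ℝ) → ℝ} {y : n → ℝ} {C : ℝ} (hf : ∀ a, f a = (a - y) ⬝ᵥ (S *ᵥ (a - y)) + C) :
    ⨅ a, f a = f y := by
  refine IsLeast.isGLB ⟨Set.mem_range_self y, Set.forall_mem_range.2 fun a => ?_⟩ |>.ciInf_eq
  rw [hf, hf, sub_self, mulVec_zero, dotProduct_zero, zero_add, le_add_iff_nonneg_left]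
  simpa using hS.dotProduct_mulVec_nonneg (a - y)

lemma PosSemidef.transpose_mul_mul_add_posDef {K : Matrix n n ℝ} {R : Matrix m m ℝ}
    (hK : K.PosSemidef) (hR : R.PosDef) (B : Matrix n m ℝ) : (Bᵀ * K * B + R).PosDef := by
  simpa only [conjTranspose_eq_transpose_of_trivial] using
    PosDef.posSemidef_add (hK.conjTranspose_mul_mul_same B) hR

end Matrix

section Noise

variable {ι : Type*} [Fintype ι] {μ : Measure (ι → ℝ)}

lemma memLp_two_apply (hmom : Integrable (fun z : ι → ℝ => ‖z‖ ^ 2) μ) (j : ι) :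
    MemLp (fun z : ι → ℝ => z j) 2 μ :=
  ((memLp_two_iff_integrable_sq_norm aestronglyMeasurable_id).2 hmom).of_le
    (measurable_pi_apply j).aestronglyMeasurable
    (Filter.Eventually.of_forall fun z => norm_le_pi_norm z j)

lemma memLp_two_dotProduct (hmom : Integrable (fun z : ι → ℝ => ‖z‖ ^ 2) μ) (c : ι → ℝ) :
    MemLp (fun z : ι → ℝ => c ⬝ᵥ z) 2 μ :=
  memLp_finsetSum _ fun j _ => (memLp_two_apply hmom j).const_mul (c j)

lemma integrable_dotProduct_mulVec (hmom : Integrable (fun z : ι → ℝ => ‖z‖ ^ 2) μ)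
    (K : Matrix ι ι ℝ) : Integrable (fun z : ι → ℝ => z ⬝ᵥ (K *ᵥ z)) μ :=
  integrable_finsetSum _ fun i _ =>
    (memLp_two_apply hmom i).integrable_mul (memLp_two_dotProduct hmom (K i))

lemma integral_dotProduct_eq_zero [IsFiniteMeasure μ] (hmean : ∀ j : ι, ∫ z, z j ∂μ = 0)
    (hmom : Integrable (fun z : ι → ℝ => ‖z‖ ^ 2) μ) (c : ι → ℝ) :
    ∫ z, c ⬝ᵥ z ∂μ = 0 := by
  simp only [dotProduct]
  rw [integral_finsetSum _ fun j _ => ((memLp_two_apply hmom j).integrable one_le_two).const_mul _]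
  simp [integral_const_mul, hmean]

lemma integral_comp_add_of_eq_quadratic [IsProbabilityMeasure μ] (hmean : ∀ j : ι, ∫ z, z j ∂μ = 0)
    (hmom : Integrable (fun z : ι → ℝ => ‖z‖ ^ 2) μ) {K : Matrix ι ι ℝ} {c : ℝ}
    {V : (ι → ℝ) → ℝ} (hV : ∀ x, V x = x ⬝ᵥ (K *ᵥ x) + c) (y : ι → ℝ) :
    ∫ z, V (y + z) ∂μ = y ⬝ᵥ (K *ᵥ y) + ((∫ z, z ⬝ᵥ (K *ᵥ z) ∂μ) + c) := by
  have hcross (z : ι → ℝ) : y ⬝ᵥ (K *ᵥ z) + z ⬝ᵥ (K *ᵥ y) = (y ᵥ* K + K *ᵥ y) ⬝ᵥ z := by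
    rw [dotProduct_mulVec, dotProduct_comm z, add_dotProduct]
  have hlin := (memLp_two_dotProduct hmom (y ᵥ* K + K *ᵥ y)).integrable one_le_two
  simp_rw [hV, add_dotProduct_mulVec_add, hcross]
  have hconst_lin : Integrable (fun z => y ⬝ᵥ (K *ᵥ y) + (y ᵥ* K + K *ᵥ y) ⬝ᵥ z) μ :=
    (integrable_const _).add hlin
  rw [integral_add ?_ (integrable_const c),
    integral_add hconst_lin (integrable_dotProduct_mulVec hmom K),
    integral_add (integrable_const _) hlin, integral_dotProduct_eq_zero hmean hmom]
  · simp only [integral_const, probReal_univ, one_smul]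
    ring
  · exact hconst_lin.add (integrable_dotProduct_mulVec hmom K)

end Noise

section Riccati

variable {ι κ : Type*} [Fintype ι] [Fintype κ] [DecidableEq κ]

noncomputable def riccatiGain (A : Matrix ι ι ℝ) (B : Matrix ι κ ℝ) (R : Matrix κ κ ℝ)
    (K : Matrix ι ι ℝ) : Matrix κ ι ℝ :=
  -((Bᵀ * K * B + R)⁻¹ * (Bᵀ * K * A))

noncomputable def riccati (A : Matrix ι ι ℝ) (B : Matrix ι κ ℝ) (Q : Matrix ι ι ℝ)
    (R : Matrix κ κ ℝ) (K : Matrix ι ι ℝ) : Matrix ι ι ℝ :=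
  Aᵀ * (K - K * B * (Bᵀ * K * B + R)⁻¹ * Bᵀ * K) * A + Q

variable {A : Matrix ι ι ℝ} {B : Matrix ι κ ℝ} {Q K : Matrix ι ι ℝ} {R : Matrix κ κ ℝ}

lemma riccatiGain_normal_eq (h : IsUnit (Bᵀ * K * B + R).det) :
    Bᵀ * K * (A + B * riccatiGain A B R K) + R * riccatiGain A B R K = 0 := by
  rw [Matrix.mul_add, ← Matrix.mul_assoc (Bᵀ * K) B, add_assoc, ← Matrix.add_mul, riccatiGain,
    Matrix.mul_neg, ← Matrix.mul_assoc, Matrix.mul_nonsing_inv _ h, Matrix.one_mul,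
    add_neg_cancel]

lemma riccati_eq_closedLoop (h : IsUnit (Bᵀ * K * B + R).det) :
    riccati A B Q R K = (A + B * riccatiGain A B R K)ᵀ * K * (A + B * riccatiGain A B R K) +
      (riccatiGain A B R K)ᵀ * R * riccatiGain A B R K + Q := by
  set L := riccatiGain A B R K
  have hcross : Lᵀ * Bᵀ * K * (A + B * L) + Lᵀ * R * L = 0 := by
    have h' := riccatiGain_normal_eq (A := A) h
    simp only [Matrix.mul_assoc] at h' ⊢
    rw [← Matrix.mul_add, h', Matrix.mul_zero]
  have hAKBL : Aᵀ * K * (B * L) = -(Aᵀ * (K * B * (Bᵀ * K * B + R)⁻¹ * Bᵀ * K) * A) := by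
    simp only [L, riccatiGain, Matrix.mul_neg, Matrix.mul_assoc]
  calc riccati A B Q R K
      = Aᵀ * K * A - Aᵀ * (K * B * (Bᵀ * K * B + R)⁻¹ * Bᵀ * K) * A + Q := by
        rw [riccati, Matrix.mul_sub, Matrix.sub_mul]
    _ = Aᵀ * K * (A + B * L) + Q := by rw [Matrix.mul_add, hAKBL, sub_eq_add_neg]
    _ = Aᵀ * K * (A + B * L) + (Lᵀ * Bᵀ * K * (A + B * L) + Lᵀ * R * L) + Q := by
        rw [hcross, add_zero]
    _ = _ := by
        rw [Matrix.transpose_add, Matrix.transpose_mul, Matrix.add_mul, Matrix.add_mul]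
        abel

lemma riccati_posSemidef (hK : K.PosSemidef) (hQ : Q.PosSemidef) (hR : R.PosDef) :
    (riccati A B Q R K).PosSemidef := by
  rw [riccati_eq_closedLoop (hK.transpose_mul_mul_add_posDef hR B).det_pos.ne'.isUnit]
  simp only [← conjTranspose_eq_transpose_of_trivial]
  exact ((hK.conjTranspose_mul_mul_same _).add
    (hR.posSemidef.conjTranspose_mul_mul_same _)).add hQ

lemma quadratic_cost_eq_completeSquare (hK : K.IsSymm) (hR : R.IsSymm)
    (h : IsUnit (Bᵀ * K * B + R).det) (x : ι → ℝ) (a : κ → ℝ) :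
    x ⬝ᵥ (Q *ᵥ x) + a ⬝ᵥ (R *ᵥ a) + (A *ᵥ x + B *ᵥ a) ⬝ᵥ (K *ᵥ (A *ᵥ x + B *ᵥ a)) =
      (a - riccatiGain A B R K *ᵥ x) ⬝ᵥ ((Bᵀ * K * B + R) *ᵥ (a - riccatiGain A B R K *ᵥ x)) +
        x ⬝ᵥ (riccati A B Q R K *ᵥ x) := by
  rw [riccati_eq_closedLoop h]
  set L := riccatiGain A B R K
  set F := A + B * L
  obtain ⟨b, rfl⟩ : ∃ b, a = L *ᵥ x + b := ⟨a - L *ᵥ x, by abel⟩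
  have hstate : A *ᵥ x + B *ᵥ (L *ᵥ x + b) = F *ᵥ x + B *ᵥ b := by
    rw [mulVec_add, add_mulVec, mulVec_mulVec, add_assoc]
  have hcross : b ⬝ᵥ (R *ᵥ (L *ᵥ x)) + (B *ᵥ b) ⬝ᵥ (K *ᵥ (F *ᵥ x)) = 0 := by
    have hF : R * L + Bᵀ * K * F = 0 := by rw [add_comm]; exact riccatiGain_normal_eq h
    calc _ = b ⬝ᵥ ((R * L + Bᵀ * K * F) *ᵥ x) := by
          rw [add_mulVec (R * L), dotProduct_add b, dotProduct_transpose_mul_mul_mulVec,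
            ← mulVec_mulVec]
      _ = 0 := by rw [hF, zero_mulVec, dotProduct_zero]
  rw [hstate, add_sub_cancel_left]
  simp only [add_dotProduct_mulVec_add, add_mulVec, dotProduct_add,
    dotProduct_transpose_mul_mul_mulVec, hR.dotProduct_mulVec_comm (L *ᵥ x) b,
    hK.dotProduct_mulVec_comm (F *ᵥ x) (B *ᵥ b)]
  linear_combination 2 * hcross

lemma bellman_step {μ : Measure (ι → ℝ)} [IsProbabilityMeasure μ] (hmean : ∀ j : ι, ∫ z, z j ∂μ = 0)
    (hmom : Integrable (fun z : ι → ℝ => ‖z‖ ^ 2) μ) (hK : K.PosSemidef) (hR : R.PosDef)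
    {V' W : (ι → ℝ) → ℝ} {c : ℝ} (hV' : ∀ x, V' x = x ⬝ᵥ (K *ᵥ x) + c)
    (hW : ∀ x, W x = ⨅ a : κ → ℝ,
      x ⬝ᵥ (Q *ᵥ x) + a ⬝ᵥ (R *ᵥ a) + ∫ z, V' (A *ᵥ x + B *ᵥ a + z) ∂μ) (x : ι → ℝ) :
    W x = x ⬝ᵥ (riccati A B Q R K *ᵥ x) + ((∫ z, z ⬝ᵥ (K *ᵥ z) ∂μ) + c) ∧
      W x = x ⬝ᵥ (Q *ᵥ x) + (riccatiGain A B R K *ᵥ x) ⬝ᵥ (R *ᵥ (riccatiGain A B R K *ᵥ x)) +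
        ∫ z, V' (A *ᵥ x + B *ᵥ (riccatiGain A B R K *ᵥ x) + z) ∂μ := by
  have hS := hK.transpose_mul_mul_add_posDef hR B
  have hcost (a : κ → ℝ) :
      x ⬝ᵥ (Q *ᵥ x) + a ⬝ᵥ (R *ᵥ a) + ∫ z, V' (A *ᵥ x + B *ᵥ a + z) ∂μ =
        (a - riccatiGain A B R K *ᵥ x) ⬝ᵥ
            ((Bᵀ * K * B + R) *ᵥ (a - riccatiGain A B R K *ᵥ x)) +
          (x ⬝ᵥ (riccati A B Q R K *ᵥ x) + ((∫ z, z ⬝ᵥ (K *ᵥ z) ∂μ) + c)) := by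
    rw [integral_comp_add_of_eq_quadratic hmean hmom hV', ← add_assoc,
      quadratic_cost_eq_completeSquare (isHermitian_iff_isSymm.1 hK.isHermitian)
        (isHermitian_iff_isSymm.1 hR.isHermitian) hS.det_pos.ne'.isUnit, add_assoc]
  have hmin := (hW x).trans (hS.posSemidef.ciInf_eq_of_eq_dotProduct_mulVec_sub_add hcost)
  refine ⟨?_, hmin⟩
  rw [hmin, hcost, sub_self, mulVec_zero, dotProduct_zero, zero_add]

end Riccati

/-- **LQC / Riccati.** For the linear–quadratic control problem with dynamics
`x_{n+1} = Aₙ xₙ + Bₙ aₙ + z_{n+1}` and quadratic costs, the Bellman (minimal-cost) value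
functions are `Vₙ(x) = xᵀ Kₙ x + Σ_{i=n}^{N−1} E[z_{i+1}ᵀ K_{i+1} z_{i+1}]` with `Kₙ` given
by the Riccati recursion, and the infimum in the Bellman recursion is attained by the
linear policy `α*ₙ(x) = Lₙ x` with `Lₙ = −(BₙᵀK_{n+1}Bₙ + Rₙ)⁻¹ BₙᵀK_{n+1}Aₙ`. -/
theorem lqc_riccati {d m N : ℕ}
    (A : ℕ → Matrix (Fin d) (Fin d) ℝ) (B : ℕ → Matrix (Fin d) (Fin m) ℝ)
    (Q : ℕ → Matrix (Fin d) (Fin d) ℝ) (R : ℕ → Matrix (Fin m) (Fin m) ℝ)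
    (hQ : ∀ n, (Q n).PosSemidef) (hR : ∀ n, (R n).PosDef)
    (μ : Measure (Fin d → ℝ)) [IsProbabilityMeasure μ]
    -- zero-mean noise with finite second moment
    (hmean : ∀ j : Fin d, ∫ z, z j ∂μ = 0)
    (hmom : Integrable (fun z : Fin d → ℝ => ‖z‖ ^ 2) μ)
    -- the Riccati recursion
    (K : ℕ → Matrix (Fin d) (Fin d) ℝ)
    (hKN : K N = Q N)
    (hK : ∀ n < N, K n =
      (A n)ᵀ * (K (n + 1) -
        K (n + 1) * B n * ((B n)ᵀ * K (n + 1) * B n + R n)⁻¹ * (B n)ᵀ * K (n + 1)) * A n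
        + Q n)
    -- the Bellman recursion for the value functions
    (V : ℕ → (Fin d → ℝ) → ℝ)
    (hVN : ∀ x, V N x = x ⬝ᵥ (Q N *ᵥ x))
    (hBell : ∀ n < N, ∀ x : Fin d → ℝ,
      V n x = ⨅ a : Fin m → ℝ,
        (x ⬝ᵥ (Q n *ᵥ x) + a ⬝ᵥ (R n *ᵥ a) +
          ∫ z, V (n + 1) (A n *ᵥ x + B n *ᵥ a + z) ∂μ)) :
    (∀ n ≤ N, ∀ x : Fin d → ℝ,
      V n x = x ⬝ᵥ (K n *ᵥ x) +
        ∑ i ∈ Finset.Ico n N, ∫ z, z ⬝ᵥ (K (i + 1) *ᵥ z) ∂μ) ∧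
    (∀ n < N, ∀ x : Fin d → ℝ,
      V n x =
        x ⬝ᵥ (Q n *ᵥ x) +
          ((-(((B n)ᵀ * K (n + 1) * B n + R n)⁻¹ * ((B n)ᵀ * K (n + 1) * A n))) *ᵥ x)
            ⬝ᵥ (R n *ᵥ
              ((-(((B n)ᵀ * K (n + 1) * B n + R n)⁻¹ * ((B n)ᵀ * K (n + 1) * A n))) *ᵥ x)) +
          ∫ z, V (n + 1)
            (A n *ᵥ x +
              B n *ᵥ
                ((-(((B n)ᵀ * K (n + 1) * B n + R n)⁻¹ * ((B n)ᵀ * K (n + 1) * A n))) *ᵥ x) +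
              z) ∂μ) := by
  set c : ℕ → ℝ := fun n => ∑ i ∈ Finset.Ico n N, ∫ z, z ⬝ᵥ (K (i + 1) *ᵥ z) ∂μ
  have hvalue : ∀ n ≤ N, (K n).PosSemidef ∧ ∀ x, V n x = x ⬝ᵥ (K n *ᵥ x) + c n := by
    intro n hn
    induction hn using Nat.decreasingInduction with
    | self => exact ⟨hKN ▸ hQ N, fun x => by simp [c, hVN, hKN]⟩
    | of_succ n hn ih =>
      obtain ⟨hKpsd, hV⟩ := ih
      refine ⟨hK n hn ▸ riccati_posSemidef hKpsd (hQ n) (hR n), fun x => ?_⟩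
      rw [(bellman_step hmean hmom hKpsd (hR n) hV (hBell n hn) x).1, hK n hn,
        show c n = _ + c (n + 1) from Finset.sum_eq_sum_Ico_succ_bot hn _]
      rfl
  refine ⟨fun n hn => (hvalue n hn).2, fun n hn => ?_⟩
  obtain ⟨hKpsd, hV⟩ := hvalue (n + 1) hn
  exact fun x => (bellman_step hmean hmom hKpsd (hR n) hV (hBell n hn) x).2
end

section
/- In the linear-quadratic control problem, the value-based optimal dual penalty has the exact closed form M*(α, z) = Σ_{n=0}^{N−1} {2(A_n x_n + B_n a_n)ᵀ K_{n+1} z_{n+1} + z_{n+1}ᵀ K_{n+1} z_{n+1} − E[z_{n+1}ᵀ K_{n+1} z_{n+1}]}, i.e., the martingale difference V_{n+1}(x_{n+1}) − E[V_{n+1}(x_{n+1})|x_n,a_n] equals 2(A_n x_n + B_n a_n)ᵀ K_{n+1} z_{n+1} + z_{n+1}ᵀ K_{n+1} z_{n+1} − E[z_{n+1}ᵀ K_{n+1} z_{n+1}] for each n. -/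
/-!
Write the next state as `y + z` with `y = Aₙxₙ + Bₙaₙ` known at time `n`. For symmetric `K`,
`(y + z)ᵀK(y + z) = yᵀKy + 2yᵀKz + zᵀKz`; integrating over the noise, `yᵀKy` and the constant
of the value function come out unchanged and the cross term vanishes because the noise is
centred, so the difference is `2yᵀKz + zᵀKz − E[ζᵀKζ]`.
-/

open MeasureTheory Matrix

namespace Matrix

variable {ι R : Type*} [Fintype ι] [CommSemiring R] {K : Matrix ι ι R}

theorem IsSymm.dotProduct_mulVec_comm_s14 (hK : K.IsSymm) (y z : ι → R) :
    z ⬝ᵥ (K *ᵥ y) = y ⬝ᵥ (K *ᵥ z) := by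
  rw [dotProduct_mulVec, ← mulVec_transpose, hK.eq, dotProduct_comm]

theorem IsSymm.add_dotProduct_mulVec_add (hK : K.IsSymm) (y z : ι → R) :
    (y + z) ⬝ᵥ (K *ᵥ (y + z)) = y ⬝ᵥ (K *ᵥ y) + 2 * (y ⬝ᵥ (K *ᵥ z)) + z ⬝ᵥ (K *ᵥ z) := by
  simp only [mulVec_add, add_dotProduct, dotProduct_add, hK.dotProduct_mulVec_comm_s14 y z]
  ring

end Matrix

namespace MeasureTheory

variable {α ι : Type*} [Fintype ι] {m : MeasurableSpace α} {μ : Measure α} {f : α → ι → ℝ}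

theorem Integrable.const_dotProduct (hf : Integrable f μ) (w : ι → ℝ) :
    Integrable (fun x => w ⬝ᵥ f x) μ :=
  integrable_finsetSum _ fun j _ => (hf.eval j).const_mul (w j)

theorem integral_const_dotProduct (hf : Integrable f μ) (w : ι → ℝ) :
    ∫ x, w ⬝ᵥ f x ∂μ = ∑ j, w j * ∫ x, f x j ∂μ := by
  have hterm (j : ι) : Integrable (fun x => w j * f x j) μ := (hf.eval j).const_mul (w j)
  simp only [dotProduct, integral_finsetSum _ fun j _ => hterm j, integral_const_mul]

theorem MemLp.integrable_dotProduct_mulVec (hf : MemLp f 2 μ) (K : Matrix ι ι ℝ) :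
    Integrable (fun x => f x ⬝ᵥ (K *ᵥ f x)) μ := by
  have hKf : MemLp (fun x => K *ᵥ f x) 2 μ :=
    hf.continuousLinearMap_comp (mulVecLin K).toContinuousLinearMap
  exact integrable_finsetSum _ fun i _ => (hf.eval i).integrable_mul (hKf.eval i)

end MeasureTheory

section CenteredNoise

variable {ι : Type*} [Fintype ι] {μ : Measure (ι → ℝ)} [IsProbabilityMeasure μ]
  {K : Matrix ι ι ℝ}

theorem integral_add_dotProduct_mulVec_add (hK : K.IsSymm) (hL2 : MemLp id 2 μ)
    (hmean : ∀ j, ∫ z, z j ∂μ = 0) (y : ι → ℝ) :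
    ∫ ζ, (y + ζ) ⬝ᵥ (K *ᵥ (y + ζ)) ∂μ = y ⬝ᵥ (K *ᵥ y) + ∫ ζ, ζ ⬝ᵥ (K *ᵥ ζ) ∂μ := by
  have hint : Integrable (fun ζ : ι → ℝ => ζ) μ := hL2.integrable one_le_two
  have hquad : Integrable (fun ζ : ι → ℝ => ζ ⬝ᵥ (K *ᵥ ζ)) μ := hL2.integrable_dotProduct_mulVec K
  have hcross : Integrable (fun ζ => 2 * (y ⬝ᵥ (K *ᵥ ζ))) μ := by
    simpa only [dotProduct_mulVec y K] using (hint.const_dotProduct _).const_mul 2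
  have hcross_mean : ∫ ζ, 2 * (y ⬝ᵥ (K *ᵥ ζ)) ∂μ = 0 := by
    simp [integral_const_mul, dotProduct_mulVec y K, integral_const_dotProduct hint, hmean]
  have hlin : Integrable (fun ζ => y ⬝ᵥ (K *ᵥ y) + 2 * (y ⬝ᵥ (K *ᵥ ζ))) μ :=
    (integrable_const _).add hcross
  simp only [hK.add_dotProduct_mulVec_add]
  rw [integral_add hlin hquad, integral_add (integrable_const _) hcross, hcross_mean]
  simp

theorem sub_integral_quadratic_value (hK : K.IsSymm) (hL2 : MemLp id 2 μ)
    (hmean : ∀ j, ∫ z, z j ∂μ = 0) (c : ℝ) (y z : ι → ℝ) :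
    (y + z) ⬝ᵥ (K *ᵥ (y + z)) + c - ∫ ζ, ((y + ζ) ⬝ᵥ (K *ᵥ (y + ζ)) + c) ∂μ
      = 2 * (y ⬝ᵥ (K *ᵥ z)) + z ⬝ᵥ (K *ᵥ z) - ∫ ζ, ζ ⬝ᵥ (K *ᵥ ζ) ∂μ := by
  have hquad : Integrable (fun ζ => (y + ζ) ⬝ᵥ (K *ᵥ (y + ζ))) μ :=
    ((memLp_const y).add hL2).integrable_dotProduct_mulVec K
  rw [integral_add hquad (integrable_const c), integral_add_dotProduct_mulVec_add hK hL2 hmean,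
    hK.add_dotProduct_mulVec_add]
  simp only [integral_const, probReal_univ, smul_eq_mul, one_mul, add_sub_add_right_eq_sub]
  ring

end CenteredNoise

/-- **Exact optimal dual penalty for LQC.** With quadratic value functions
`Vₙ(x) = xᵀKₙx + cₙ` (as delivered by the Riccati recursion) and dynamics
`x_{n+1} = Aₙxₙ + Bₙaₙ + z_{n+1}` with zero-mean noise, each martingale difference equals
`2(Aₙxₙ + Bₙaₙ)ᵀK_{n+1}z_{n+1} + z_{n+1}ᵀK_{n+1}z_{n+1} − E[zᵀK_{n+1}z]`; hence the
value-based optimal dual penalty `M*(α,z)` has this exact closed form summed over `n`. -/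
theorem lqc_optimal_penalty_closed_form {d N : ℕ} {mA : ℕ}
    (A : ℕ → Matrix (Fin d) (Fin d) ℝ) (B : ℕ → Matrix (Fin d) (Fin mA) ℝ)
    (K : ℕ → Matrix (Fin d) (Fin d) ℝ) (hKsymm : ∀ n, (K n).IsSymm)
    (c : ℕ → ℝ)
    (V : ℕ → (Fin d → ℝ) → ℝ)
    (hV : ∀ n x, V n x = x ⬝ᵥ (K n *ᵥ x) + c n)
    (μ : Measure (Fin d → ℝ)) [IsProbabilityMeasure μ]
    (hmean : ∀ j : Fin d, ∫ z, z j ∂μ = 0)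
    (hmom : Integrable (fun z : Fin d → ℝ => ‖z‖ ^ 2) μ) :
    -- per-step identity for the martingale difference
    (∀ n < N, ∀ (x : Fin d → ℝ) (a : Fin mA → ℝ) (z : Fin d → ℝ),
      V (n + 1) (A n *ᵥ x + B n *ᵥ a + z) -
          ∫ ζ, V (n + 1) (A n *ᵥ x + B n *ᵥ a + ζ) ∂μ
        = 2 * ((A n *ᵥ x + B n *ᵥ a) ⬝ᵥ (K (n + 1) *ᵥ z)) +
            z ⬝ᵥ (K (n + 1) *ᵥ z) - ∫ ζ, ζ ⬝ᵥ (K (n + 1) *ᵥ ζ) ∂μ) ∧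
    -- hence the summed optimal dual penalty has the closed form
    (∀ (x : ℕ → Fin d → ℝ) (aAct : ℕ → Fin mA → ℝ) (z : ℕ → Fin d → ℝ),
      (∀ n, x (n + 1) = A n *ᵥ x n + B n *ᵥ aAct n + z (n + 1)) →
      ∑ n ∈ Finset.range N,
          (V (n + 1) (x (n + 1)) -
            ∫ ζ, V (n + 1) (A n *ᵥ x n + B n *ᵥ aAct n + ζ) ∂μ)
        = ∑ n ∈ Finset.range N,
            (2 * ((A n *ᵥ x n + B n *ᵥ aAct n) ⬝ᵥ (K (n + 1) *ᵥ z (n + 1))) +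
              z (n + 1) ⬝ᵥ (K (n + 1) *ᵥ z (n + 1)) -
              ∫ ζ, ζ ⬝ᵥ (K (n + 1) *ᵥ ζ) ∂μ)) := by
  obtain rfl : V = fun n x => x ⬝ᵥ (K n *ᵥ x) + c n := funext₂ hV
  have hL2 : MemLp id 2 μ := (memLp_two_iff_integrable_sq_norm aestronglyMeasurable_id).2 hmom
  have step (n : ℕ) (y z : Fin d → ℝ) :=
    sub_integral_quadratic_value (hKsymm (n + 1)) hL2 hmean (c (n + 1)) y z
  refine ⟨fun n _ x a z => step n _ z, fun x a z hdyn => Finset.sum_congr rfl fun n _ => ?_⟩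
  rw [hdyn n]
  exact step n _ _
end
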